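/- arXiv:1502.01134 — 5 statements merged into one kernel-verified Lean document; each statement's English description precedes it below -/
import Mathlib

section
/- Fix x with 0 < x < P := P_SD + (1−P_SD)·P_SR, P_SD, P_SR, P_RD ∈ (0,1). The unconstrained maximizer over q_R ∈ [0,1) of y(q_R) = q_R·P_RD − ((1−P_SD)·P_SR/P)·x − (q_R·P_RD/((1−q_R)·P))·x is q_R* = 1 − √(x/P), and the maximum value is y* = P_RD − 2·P_RD·√(x/P) + (x/P)·(P_RD − (1−P_SD)·P_SR). -/
/-!
Writing `s = √(x/P)`, the objective is `P_RD · (q - q s² / (1 - q))` minus a constant, and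
`(1 - s)² - (q - q s² / (1 - q)) = (1 - s - q)² / (1 - q) ≥ 0` for `q < 1`, with equality at
`q = 1 - s`.
-/

open Set Real

lemma sub_mul_sq_div_one_sub_at_one_sub {s : ℝ} (hs : s ≠ 0) :
    (1 - s) - (1 - s) * s ^ 2 / (1 - (1 - s)) = (1 - s) ^ 2 := by
  rw [sub_sub_cancel, sq, ← mul_assoc, mul_div_cancel_right₀ _ hs]
  ring

lemma isMaxOn_sub_mul_sq_div_one_sub {s : ℝ} (hs : s ≠ 0) :
    IsMaxOn (fun q => q - q * s ^ 2 / (1 - q)) (Iio 1) (1 - s) := by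
  intro q (hq : q < 1)
  have hq' : 0 < 1 - q := sub_pos.2 hq
  have gap : (1 - s) ^ 2 - (q - q * s ^ 2 / (1 - q)) = (1 - s - q) ^ 2 / (1 - q) := by
    field_simp
    ring
  show q - q * s ^ 2 / (1 - q) ≤ (1 - s) - (1 - s) * s ^ 2 / (1 - (1 - s))
  rw [sub_mul_sq_div_one_sub_at_one_sub hs, ← sub_nonneg, gap]
  positivity

theorem P2_maximizer_general (P_SD P_SR P_RD x : ℝ)
    (hRD : P_RD ∈ Set.Ioo (0:ℝ) 1)
    (P : ℝ)
    (hx0 : 0 < x) (hx1 : x < P) :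
    IsMaxOn
      (fun q_R => q_R * P_RD - ((1 - P_SD) * P_SR / P) * x
        - (q_R * P_RD / ((1 - q_R) * P)) * x)
      (Set.Ico (0:ℝ) 1) (1 - Real.sqrt (x / P)) ∧
    (fun q_R => q_R * P_RD - ((1 - P_SD) * P_SR / P) * x
        - (q_R * P_RD / ((1 - q_R) * P)) * x) (1 - Real.sqrt (x / P))
      = P_RD - 2 * P_RD * Real.sqrt (x / P)
        + (x / P) * (P_RD - (1 - P_SD) * P_SR) := by
  have hr : 0 < x / P := div_pos hx0 (hx0.trans hx1)
  set s := √(x / P)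
  have hs2 : s ^ 2 = x / P := sq_sqrt hr.le
  have hs : s ≠ 0 := (sqrt_pos.2 hr).ne'
  have hf : (fun q_R => q_R * P_RD - ((1 - P_SD) * P_SR / P) * x
        - (q_R * P_RD / ((1 - q_R) * P)) * x) =
      fun q => P_RD * (q - q * s ^ 2 / (1 - q)) - (1 - P_SD) * P_SR / P * x := by
    funext q
    rw [hs2, mul_comm (1 - q) P, ← div_div]
    ring
  have hmono : Monotone fun t => P_RD * t - (1 - P_SD) * P_SR / P * x := 
    fun _ _ hab => sub_le_sub_right (mul_le_mul_of_nonneg_left hab hRD.1.le) _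
  rw [hf]
  refine ⟨((isMaxOn_sub_mul_sq_div_one_sub hs).on_subset Ico_subset_Iio_self).comp_mono hmono, ?_⟩
  beta_reduce
  rw [sub_mul_sq_div_one_sub_at_one_sub hs]
  linear_combination P_RD * hs2

/-- The unconstrained maximizer over `q_R ∈ [0,1)` of the relay throughput
objective of problem [P2] is `q_R* = 1 - √(x/P)`, with the stated maximum
value. -/
theorem P2_maximizer (P_SD P_SR P_RD x : ℝ)
    (hSD : P_SD ∈ Set.Ioo (0:ℝ) 1) (hSR : P_SR ∈ Set.Ioo (0:ℝ) 1)
    (hRD : P_RD ∈ Set.Ioo (0:ℝ) 1)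
    (P : ℝ) (hP : P = P_SD + (1 - P_SD) * P_SR)
    (hx0 : 0 < x) (hx1 : x < P) :
    IsMaxOn
      (fun q_R => q_R * P_RD - ((1 - P_SD) * P_SR / P) * x
        - (q_R * P_RD / ((1 - q_R) * P)) * x)
      (Set.Ico (0:ℝ) 1) (1 - Real.sqrt (x / P)) ∧
    (fun q_R => q_R * P_RD - ((1 - P_SD) * P_SR / P) * x
        - (q_R * P_RD / ((1 - q_R) * P)) * x) (1 - Real.sqrt (x / P))
      = P_RD - 2 * P_RD * Real.sqrt (x / P)
        + (x / P) * (P_RD - (1 - P_SD) * P_SR) :=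
  P2_maximizer_general P_SD P_SR P_RD x hRD P hx0 hx1
end

section
/- Let δ_R ∈ (0,1), P_SD, P_SR, P_RD ∈ (0,1), P = P_SD + (1−P_SD)·P_SR. The line y = δ_R·P_RD − ((1−P_SD)·P_SR/P)·x − (δ_R·P_RD/((1−δ_R)·P))·x passes through the point B = (x_B, y_B) with x_B = (1−δ_R)²·P and y_B = δ_R²·P_RD − (1−δ_R)²·(1−P_SD)·P_SR, and at x_B it is tangent (has matching value and slope) to the curve y = P_RD − 2·P_RD·√(x/P) + (x/P)·(P_RD − (1−P_SD)·P_SR). -/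
/-!
At `x_B = (1 - δ_R)² P` the square root in the curve is exact, `√(x_B / P) = 1 - δ_R`, so
the curve value at `B` is `P_RD δ_R² - (1 - δ_R)² (1 - P_SD) P_SR`, and its slope
`(P_RD - (1 - P_SD) P_SR - P_RD / √(x_B / P)) / P` is the slope of the line because
`P_RD - P_RD / (1 - δ_R) = -δ_R P_RD / (1 - δ_R)`.
-/

open Real

noncomputable def boundaryCurve (a c P x : ℝ) : ℝ :=
  a - 2 * a * √(x / P) + x / P * (a - c)

lemma boundaryCurve_of_div_eq_sq {a c P x s : ℝ} (hs : 0 ≤ s) (hx : x / P = s ^ 2) :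
    boundaryCurve a c P x = a * (1 - s) ^ 2 - c * s ^ 2 := by
  rw [boundaryCurve, hx, sqrt_sq hs]
  ring

lemma hasDerivAt_boundaryCurve {a c P x : ℝ} (hx : x / P ≠ 0) :
    HasDerivAt (boundaryCurve a c P) ((a - c - a / √(x / P)) / P) x := by
  have hdiv : HasDerivAt (fun x : ℝ => x / P) (1 / P) x := (hasDerivAt_id x).div_const P
  have hsqrt := (hasDerivAt_sqrt hx).comp x hdiv
  refine (((hsqrt.const_mul (2 * a)).const_sub a).add (hdiv.mul_const (a - c))).congr_deriv ?_
  field_simp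
  ring

lemma hasDerivAt_const_sub_mul_sub_mul (b m n x : ℝ) :
    HasDerivAt (fun x => b - m * x - n * x) (-m - n) x :=
  ((((hasDerivAt_id' x).const_mul m).const_sub b).sub
    ((hasDerivAt_id' x).const_mul n)).congr_deriv (by ring)

theorem tangency_at_B_general (δ_R P_SD P_SR P_RD : ℝ)
    (hδR : δ_R ∈ Set.Ioo (0:ℝ) 1)
    (hSD : P_SD ∈ Set.Ioo (0:ℝ) 1) (hSR : P_SR ∈ Set.Ioo (0:ℝ) 1)
    (P : ℝ) (hP : P = P_SD + (1 - P_SD) * P_SR)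
    (L g : ℝ → ℝ)
    (hL : ∀ x, L x = δ_R * P_RD - ((1 - P_SD) * P_SR / P) * x
      - (δ_R * P_RD / ((1 - δ_R) * P)) * x)
    (hg : ∀ x, g x = P_RD - 2 * P_RD * Real.sqrt (x / P)
      + (x / P) * (P_RD - (1 - P_SD) * P_SR))
    (xB yB : ℝ) (hxB : xB = (1 - δ_R) ^ 2 * P)
    (hyB : yB = δ_R ^ 2 * P_RD - (1 - δ_R) ^ 2 * ((1 - P_SD) * P_SR)) :
    L xB = yB ∧ g xB = yB ∧
    HasDerivAt L (-((1 - P_SD) * P_SR / P) - δ_R * P_RD / ((1 - δ_R) * P)) xB ∧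
    HasDerivAt g (-((1 - P_SD) * P_SR / P) - δ_R * P_RD / ((1 - δ_R) * P)) xB := by
  have hP0 : P ≠ 0 := hP ▸
    (add_pos_of_pos_of_nonneg hSD.1 (mul_nonneg (sub_nonneg.2 hSD.2.le) hSR.1.le)).ne'
  have hs : 0 < 1 - δ_R := sub_pos.2 hδR.2
  have hxP : xB / P = (1 - δ_R) ^ 2 := by rw [hxB]; field_simp
  have hg_eq : g = boundaryCurve P_RD ((1 - P_SD) * P_SR) P := funext hg
  refine ⟨?_, ?_, ?_, ?_⟩
  · rw [hL, hxB, hyB]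
    field_simp
    ring
  · rw [hg_eq, boundaryCurve_of_div_eq_sq hs.le hxP, hyB]
    ring
  · rw [funext hL]
    exact hasDerivAt_const_sub_mul_sub_mul _ _ _ xB
  · rw [hg_eq]
    convert hasDerivAt_boundaryCurve (hxP ▸ pow_ne_zero 2 hs.ne') using 1
    rw [hxP, sqrt_sq hs.le]
    field_simp
    ring

/-- The linear segment AB of the closure boundary passes through point B and
is tangent there (matching value and slope) to the nonlinear boundary curve. -/
theorem tangency_at_B (δ_R P_SD P_SR P_RD : ℝ)
    (hδR : δ_R ∈ Set.Ioo (0:ℝ) 1)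
    (hSD : P_SD ∈ Set.Ioo (0:ℝ) 1) (hSR : P_SR ∈ Set.Ioo (0:ℝ) 1)
    (hRD : P_RD ∈ Set.Ioo (0:ℝ) 1)
    (P : ℝ) (hP : P = P_SD + (1 - P_SD) * P_SR)
    (L g : ℝ → ℝ)
    (hL : ∀ x, L x = δ_R * P_RD - ((1 - P_SD) * P_SR / P) * x
      - (δ_R * P_RD / ((1 - δ_R) * P)) * x)
    (hg : ∀ x, g x = P_RD - 2 * P_RD * Real.sqrt (x / P)
      + (x / P) * (P_RD - (1 - P_SD) * P_SR))
    (xB yB : ℝ) (hxB : xB = (1 - δ_R) ^ 2 * P)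
    (hyB : yB = δ_R ^ 2 * P_RD - (1 - δ_R) ^ 2 * ((1 - P_SD) * P_SR)) :
    L xB = yB ∧ g xB = yB ∧
    HasDerivAt L (-((1 - P_SD) * P_SR / P) - δ_R * P_RD / ((1 - δ_R) * P)) xB ∧
    HasDerivAt g (-((1 - P_SD) * P_SR / P) - δ_R * P_RD / ((1 - δ_R) * P)) xB :=
  tangency_at_B_general δ_R P_SD P_SR P_RD hδR hSD hSR P hP L g hL hg xB yB hxB hyB
end

section
/- Let δ_S, δ_R, q_S, q_R ∈ [0,1] and P_SD, P_SR, P_RD ∈ (0,1) with P = P_SD + (1−P_SD)·P_SR. Every pair (λ_S, λ_R) in the inner bound R_inner, i.e. satisfying λ_S < min(δ_S,q_S)·(1−min(δ_R,q_R))·P and λ_R + ((1−P_SD)·P_SR/P)·λ_S < min(δ_R,q_R)·(1−min(δ_S,q_S))·P_RD, also lies in the region R_2 defined by λ_R + [ (1−m_R)·(1−P_SD)·P_SR + m_R·P_RD ]/[ (1−m_R)·P ]·λ_S < m_R·P_RD and λ_S < m_S·(1−m_R)·P, where m_S = min(δ_S,q_S), m_R = min(δ_R,q_R). -/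
/-!
On `R_inner` we have `λ_S < m_S (1 - m_R) P`, so the extra slope `m_R P_RD / ((1 - m_R) P)` that
`R_2` puts on `λ_S` costs less than `m_R m_S P_RD`. This is exactly the gap between the right-hand
sides `m_R (1 - m_S) P_RD` and `m_R P_RD` of the two relay constraints.
-/

lemma min_mem_Icc_of_mem_Icc {a b x y : ℝ} (hx : x ∈ Set.Icc a b) (hy : y ∈ Set.Icc a b) :
    min x y ∈ Set.Icc a b :=
  ⟨le_min hx.1 hy.1, min_le_of_left_le hx.2⟩

lemma lt_one_of_nonneg_of_lt_mul_one_sub {x c m P : ℝ} (hm : m ≤ 1) (hx : 0 ≤ x)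
    (h : x < c * (1 - m) * P) : m < 1 := by
  refine lt_of_le_of_ne hm ?_
  rintro rfl
  simp only [sub_self, mul_zero, zero_mul] at h
  linarith

lemma add_one_sub_mul_pos {p q : ℝ} (hp : p ∈ Set.Ioo (0 : ℝ) 1) (hq : 0 ≤ q) :
    0 < p + (1 - p) * q :=
  add_pos_of_pos_of_nonneg hp.1 (mul_nonneg (sub_nonneg.mpr hp.2.le) hq)

lemma add_div_mul_lt_of_lt_mul_of_add_div_mul_lt {a d m mS P lamS lamR : ℝ} (hP : 0 < P)
    (hm0 : 0 ≤ m) (hm1 : m < 1) (hd : 0 ≤ d) (h1 : lamS < mS * (1 - m) * P)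
    (h2 : lamR + a / P * lamS < m * (1 - mS) * d) :
    lamR + ((1 - m) * a + m * d) / ((1 - m) * P) * lamS < m * d := by
  have hm : (1 - m) ≠ 0 := (sub_pos.mpr hm1).ne'
  have hsplit : ((1 - m) * a + m * d) / ((1 - m) * P) = a / P + m * d / ((1 - m) * P) := by
    field_simp
  have hrelay : m * d / ((1 - m) * P) * lamS ≤ m * mS * d :=
    calc m * d / ((1 - m) * P) * lamS
        ≤ m * d / ((1 - m) * P) * (mS * (1 - m) * P) :=
          mul_le_mul_of_nonneg_left h1.le (div_nonneg (mul_nonneg hm0 hd)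
            (mul_nonneg (sub_nonneg.mpr hm1.le) hP.le))
      _ = m * mS * d := by field_simp
  rw [hsplit, add_mul]
  linarith

theorem inner_subset_R2_general (δ_R q_R P_SD P_SR P_RD lamS lamR : ℝ)
    (hδR : δ_R ∈ Set.Icc (0:ℝ) 1) (hqR : q_R ∈ Set.Icc (0:ℝ) 1)
    (hSD : P_SD ∈ Set.Ioo (0:ℝ) 1) (hSR : P_SR ∈ Set.Ioo (0:ℝ) 1)
    (hRD : P_RD ∈ Set.Ioo (0:ℝ) 1)
    (P : ℝ) (hP : P = P_SD + (1 - P_SD) * P_SR)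
    (hlamS0 : 0 ≤ lamS)
    (mS mR : ℝ) (hmR : mR = min δ_R q_R)
    (h1 : lamS < mS * (1 - mR) * P)
    (h2 : lamR + ((1 - P_SD) * P_SR / P) * lamS < mR * (1 - mS) * P_RD) :
    lamR + (((1 - mR) * ((1 - P_SD) * P_SR) + mR * P_RD) / ((1 - mR) * P)) * lamS
      < mR * P_RD ∧
    lamS < mS * (1 - mR) * P := by
  have hmR_mem : mR ∈ Set.Icc (0 : ℝ) 1 := hmR ▸ min_mem_Icc_of_mem_Icc hδR hqR
  have hmR1 : mR < 1 := lt_one_of_nonneg_of_lt_mul_one_sub hmR_mem.2 hlamS0 h1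
  have hP0 : 0 < P := hP ▸ add_one_sub_mul_pos hSD hSR.1.le
  exact ⟨add_div_mul_lt_of_lt_mul_of_add_div_mul_lt hP0 hmR_mem.1 hmR1 hRD.1.le h1 h2, h1⟩

/-- The inner bound `R_inner` is contained in the region `R_2` of the outer
bound. -/
theorem inner_subset_R2 (δ_S δ_R q_S q_R P_SD P_SR P_RD lamS lamR : ℝ)
    (hδS : δ_S ∈ Set.Icc (0:ℝ) 1) (hδR : δ_R ∈ Set.Icc (0:ℝ) 1)
    (hqS : q_S ∈ Set.Icc (0:ℝ) 1) (hqR : q_R ∈ Set.Icc (0:ℝ) 1)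
    (hSD : P_SD ∈ Set.Ioo (0:ℝ) 1) (hSR : P_SR ∈ Set.Ioo (0:ℝ) 1)
    (hRD : P_RD ∈ Set.Ioo (0:ℝ) 1)
    (P : ℝ) (hP : P = P_SD + (1 - P_SD) * P_SR)
    (hlamS0 : 0 ≤ lamS) (hlamR0 : 0 ≤ lamR)
    (mS mR : ℝ) (hmS : mS = min δ_S q_S) (hmR : mR = min δ_R q_R)
    (h1 : lamS < mS * (1 - mR) * P)
    (h2 : lamR + ((1 - P_SD) * P_SR / P) * lamS < mR * (1 - mS) * P_RD) :
    lamR + (((1 - mR) * ((1 - P_SD) * P_SR) + mR * P_RD) / ((1 - mR) * P)) * lamS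
      < mR * P_RD ∧
    lamS < mS * (1 - mR) * P :=
  inner_subset_R2_general δ_R q_R P_SD P_SR P_RD lamS lamR hδR hqR hSD hSR hRD P hP hlamS0 mS mR hmR
    h1 h2
end

section
/- Let P_SD, P_SR, P_RD ∈ (0,1), P = P_SD + (1−P_SD)·P_SR, and suppose P_RD > P_SD. For λ_S, λ_R ≥ 0 with √(λ_S/P) + √(((1−P_SD)·P_SR·λ_S)/(P_RD·P) + λ_R/P_RD) = 1 and λ_R = 0, λ_S satisfies √(λ_S/P)·(1 + √((1−P_SD)·P_SR/P_RD)) = 1, hence λ_S = P / (1 + √((1−P_SD)·P_SR/P_RD))², and this value strictly exceeds the maximal non-cooperative throughput P_SD obtained when the source transmits alone whenever P·P_RD > P_SD·(√P_RD + √((1−P_SD)·P_SR))². -/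
/-- On the boundary curve with `λ_R = 0`, the maximum stable source
throughput is `P / (1 + √((1-P_SD)P_SR/P_RD))²`, exceeding the direct-link
throughput `P_SD` under the stated condition. -/
theorem boundary_at_zero_relay_rate (P_SD P_SR P_RD lamS lamR : ℝ)
    (hSD : P_SD ∈ Set.Ioo (0:ℝ) 1) (hSR : P_SR ∈ Set.Ioo (0:ℝ) 1)
    (hRD : P_RD ∈ Set.Ioo (0:ℝ) 1) (hbetter : P_SD < P_RD)
    (P : ℝ) (hP : P = P_SD + (1 - P_SD) * P_SR)
    (hlamS : 0 ≤ lamS) (hlamR : lamR = 0)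
    (hcurve : Real.sqrt (lamS / P)
      + Real.sqrt (((1 - P_SD) * P_SR * lamS) / (P_RD * P) + lamR / P_RD) = 1) :
    Real.sqrt (lamS / P) * (1 + Real.sqrt ((1 - P_SD) * P_SR / P_RD)) = 1 ∧
    lamS = P / (1 + Real.sqrt ((1 - P_SD) * P_SR / P_RD)) ^ 2 ∧
    (P_SD * (Real.sqrt P_RD + Real.sqrt ((1 - P_SD) * P_SR)) ^ 2 < P * P_RD →
      P_SD < lamS) := by
  obtain ⟨hSD0, hSD1⟩ := hSD
  obtain ⟨hSR0, hSR1⟩ := hSR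
  obtain ⟨hRD0, hRD1⟩ := hRD
  have hq : 0 < (1 - P_SD) * P_SR := by nlinarith
  have hPpos : 0 < P := by nlinarith
  set q := (1 - P_SD) * P_SR with hqdef
  set a := Real.sqrt (lamS / P) with ha
  set k := Real.sqrt (q / P_RD) with hk
  have hk0 : 0 ≤ k := Real.sqrt_nonneg _
  have ha0 : 0 ≤ a := Real.sqrt_nonneg _
  have hfact : Real.sqrt ((q * lamS) / (P_RD * P) + lamR / P_RD) = k * a := by
    rw [hlamR]
    have : (q * lamS) / (P_RD * P) + 0 / P_RD = (q / P_RD) * (lamS / P) := by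
      field_simp
      ring
    rw [this, Real.sqrt_mul (by positivity)]
  have h1 : a * (1 + k) = 1 := by
    have h := hcurve
    rw [hfact] at h
    linear_combination h
  have ha2 : a ^ 2 = lamS / P := Real.sq_sqrt (by positivity)
  have h1k : 0 < 1 + k := by linarith
  have h2 : lamS = P / (1 + k) ^ 2 := by
    have : lamS / P = 1 / (1 + k) ^ 2 := by
      rw [← ha2]
      field_simp
      nlinarith [h1]
    field_simp at this ⊢
    linarith [this]
  refine ⟨h1, h2, ?_⟩
  intro hcond
  have hkval : k = Real.sqrt q / Real.sqrt P_RD := by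
    rw [hk, Real.sqrt_div hq.le]
  have hsqP : Real.sqrt P_RD ^ 2 = P_RD := Real.sq_sqrt hRD0.le
  have hsqq : Real.sqrt q ^ 2 = q := Real.sq_sqrt hq.le
  have hsP0 : 0 < Real.sqrt P_RD := Real.sqrt_pos.mpr hRD0
  -- (1+k)^2 = (√P_RD + √q)^2 / P_RD
  have hkey : (1 + k) ^ 2 = (Real.sqrt P_RD + Real.sqrt q) ^ 2 / P_RD := by
    rw [hkval]
    field_simp
    exact hsqP.symm
  rw [h2, hkey]
  have hden : 0 < (Real.sqrt P_RD + Real.sqrt q) ^ 2 := by positivity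
  rw [div_div_eq_mul_div, lt_div_iff₀ hden]
  nlinarith [hcond]
end

section
/- Let q_S, q_R, δ_S, δ_R ∈ (0,1), P_SD, P_SR, P_RD ∈ (0,1), P = P_SD + (1−P_SD)·P_SR. Suppose λ_S and λ_{R,total} = λ_R + ((1−P_SD)·P_SR/P)·λ_S satisfy the first-dominant-system conditions: λ_{R,total} < min(δ_R,q_R)·(1−min(δ_S,q_S))·P_RD, and Pr(active R) = λ_{R,total} / ((1−min(δ_S,q_S))·q_R·P_RD) ∈ [0,1]. Then the source service rate μ_S = min(δ_S,q_S)·(1 − λ_{R,total}/((1−min(δ_S,q_S))·P_RD))·P is positive, and λ_S < μ_S is equivalent to the linear inequality (1 + m_S·(1−P_SD)·P_SR/((1−m_S)·P_RD))·λ_S + (m_S·P/((1−m_S)·P_RD))·λ_R < m_S·P, where m_S = min(δ_S,q_S). -/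
/-!
Since `min(δ_R, q_R) ≤ 1`, the relay load `λ_{R,total}` stays below `(1 - m_S) P_RD`, which makes the
factor `1 - λ_{R,total} / ((1 - m_S) P_RD)` of `μ_S` positive. Substituting
`λ_{R,total} = λ_R + ((1 - P_SD) P_SR / P) λ_S` into `μ_S` turns `μ_S - λ_S` into `m_S P` minus the
linear form of the claim, which gives the equivalence.
-/

lemma add_one_sub_mul_pos_s19 {a b : ℝ} (ha : 0 < a) (ha₁ : a ≤ 1) (hb : 0 ≤ b) :
    0 < a + (1 - a) * b := by
  nlinarith

lemma lt_of_lt_min_mul {x a b c : ℝ} (h : x < min a b * c) (ha : a ≤ 1) (hc : 0 ≤ c) : x < c :=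
  h.trans_le <| by nlinarith [min_le_left a b]

lemma mul_one_sub_div_mul_pos {m x D P : ℝ} (hm : 0 < m) (hP : 0 < P) (hD : 0 < D) (hx : x < D) :
    0 < m * (1 - x / D) * P := by
  have : 0 < 1 - x / D := sub_pos.2 <| (div_lt_one hD).2 hx
  positivity

lemma mul_one_sub_div_mul_sub_eq {m a P D lamS lamR : ℝ} (hP : P ≠ 0) (hD : D ≠ 0) :
    m * (1 - (lamR + a / P * lamS) / D) * P - lamS
      = m * P - ((1 + m * a / D) * lamS + m * P / D * lamR) := by
  field_simp
  ring

lemma lt_mul_one_sub_div_mul_iff {m a P D lamS lamR : ℝ} (hP : P ≠ 0) (hD : D ≠ 0) :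
    lamS < m * (1 - (lamR + a / P * lamS) / D) * P
      ↔ (1 + m * a / D) * lamS + m * P / D * lamR < m * P := by
  rw [← sub_pos, mul_one_sub_div_mul_sub_eq hP hD, sub_pos]

theorem R1_derivation_general (δ_S δ_R q_S q_R P_SD P_SR P_RD lamS lamR : ℝ)
    (hδS : δ_S ∈ Set.Ioo (0:ℝ) 1) (hδR : δ_R ∈ Set.Ioo (0:ℝ) 1)
    (hqS : q_S ∈ Set.Ioo (0:ℝ) 1)
    (hSD : P_SD ∈ Set.Ioo (0:ℝ) 1) (hSR : P_SR ∈ Set.Ioo (0:ℝ) 1)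
    (hRD : P_RD ∈ Set.Ioo (0:ℝ) 1)
    (P : ℝ) (hP : P = P_SD + (1 - P_SD) * P_SR)
    (mS : ℝ) (hmS : mS = min δ_S q_S)
    (lamRtot : ℝ) (hlamRtot : lamRtot = lamR + ((1 - P_SD) * P_SR / P) * lamS)
    (hstab : lamRtot < min δ_R q_R * (1 - mS) * P_RD)
    (μS : ℝ) (hμS : μS = mS * (1 - lamRtot / ((1 - mS) * P_RD)) * P) :
    0 < μS ∧
    (lamS < μS ↔
      (1 + mS * ((1 - P_SD) * P_SR) / ((1 - mS) * P_RD)) * lamS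
        + (mS * P / ((1 - mS) * P_RD)) * lamR < mS * P) := by
  have hP₀ : 0 < P := hP ▸ add_one_sub_mul_pos_s19 hSD.1 hSD.2.le hSR.1.le
  have hmS₀ : 0 < mS := hmS ▸ lt_min hδS.1 hqS.1
  have hmS₁ : mS < 1 := hmS ▸ min_lt_of_left_lt hδS.2
  have hD : 0 < (1 - mS) * P_RD := mul_pos (sub_pos.2 hmS₁) hRD.1
  have hload : lamRtot < (1 - mS) * P_RD := by
    rw [mul_assoc] at hstab
    exact lt_of_lt_min_mul hstab hδR.2.le hD.le
  refine ⟨hμS ▸ mul_one_sub_div_mul_pos hmS₀ hP₀ hD hload, ?_⟩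
  rw [hμS, hlamRtot]
  exact lt_mul_one_sub_div_mul_iff hP₀.ne' hD.ne'

/-- The first-dominant-system derivation of region `R_1`: the source service
rate is positive, and the source stability condition `λ_S < μ_S` is
equivalent to the stated linear inequality. -/
theorem R1_derivation (δ_S δ_R q_S q_R P_SD P_SR P_RD lamS lamR : ℝ)
    (hδS : δ_S ∈ Set.Ioo (0:ℝ) 1) (hδR : δ_R ∈ Set.Ioo (0:ℝ) 1)
    (hqS : q_S ∈ Set.Ioo (0:ℝ) 1) (hqR : q_R ∈ Set.Ioo (0:ℝ) 1)
    (hSD : P_SD ∈ Set.Ioo (0:ℝ) 1) (hSR : P_SR ∈ Set.Ioo (0:ℝ) 1)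
    (hRD : P_RD ∈ Set.Ioo (0:ℝ) 1)
    (P : ℝ) (hP : P = P_SD + (1 - P_SD) * P_SR)
    (hlamS0 : 0 ≤ lamS) (hlamR0 : 0 ≤ lamR)
    (mS : ℝ) (hmS : mS = min δ_S q_S)
    (lamRtot : ℝ) (hlamRtot : lamRtot = lamR + ((1 - P_SD) * P_SR / P) * lamS)
    (hstab : lamRtot < min δ_R q_R * (1 - mS) * P_RD)
    (hactive : lamRtot / ((1 - mS) * q_R * P_RD) ∈ Set.Icc (0:ℝ) 1)
    (μS : ℝ) (hμS : μS = mS * (1 - lamRtot / ((1 - mS) * P_RD)) * P) :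
    0 < μS ∧
    (lamS < μS ↔
      (1 + mS * ((1 - P_SD) * P_SR) / ((1 - mS) * P_RD)) * lamS
        + (mS * P / ((1 - mS) * P_RD)) * lamR < mS * P) :=
  R1_derivation_general δ_S δ_R q_S q_R P_SD P_SR P_RD lamS lamR hδS hδR hqS hSD hSR hRD P hP mS hmS
    lamRtot hlamRtot hstab μS hμS
end
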